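/- arXiv:2412.10479 — 3 statements merged into one kernel-verified Lean document; each statement's English description precedes it below -/
import Mathlib

section
/- (Gronwall-type lemma, Lemma 2.16.) Let a ≤ b be real numbers, let u, v, w : ℝ → ℝ be functions on [a,b] such that u is nonnegative and Lebesgue integrable on [a,b], v is differentiable on [a,b] with derivative v' integrable on [a,b] (so that v(t) = v(a) + ∫_a^t v'(s) ds for all t ∈ [a,b]), and w is continuous on [a,b]. If w(t) ≤ v(t) + ∫_a^t u(s) w(s) ds for every t ∈ [a,b], then for every t ∈ [a,b], w(t) ≤ v(a) · exp(∫_a^t u(s) ds) + ∫_a^t exp(∫_s^t u(r) dr) · v'(s) ds. -/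
/-!
Put `U x = ∫ s in a..x, u s` and let `G x = c + ∫ s in a..x, v' s + ∫ s in a..x, u s * w s` be
the right-hand side of the hypothesis. The product `exp (-U) * G` is absolutely continuous, and at
almost every point its derivative is `exp (-U) * v' - exp (-U) * u * (G - w) ≤ exp (-U) * v'`, because
`u ≥ 0` and `w ≤ G`. Integrating (fundamental theorem of calculus for absolutely continuous
functions) gives `exp (-U b) * G b ≤ c + ∫ s in a..b, exp (-U s) * v' s`, and `w b ≤ G b`.
-/

open MeasureTheory Set Real

theorem LipschitzOnWith.comp_absolutelyContinuousOnInterval {X Y : Type*} [PseudoMetricSpace X]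
    [PseudoMetricSpace Y] {g : X → Y} {K : NNReal} {s : Set X} (hg : LipschitzOnWith K g s)
    {f : ℝ → X} {a b : ℝ} (hf : AbsolutelyContinuousOnInterval f a b)
    (hfs : MapsTo f (uIcc a b) s) :
    AbsolutelyContinuousOnInterval (g ∘ f) a b := by
  unfold AbsolutelyContinuousOnInterval at hf ⊢
  refine squeeze_zero' (.of_forall fun E => Finset.sum_nonneg fun i _ => dist_nonneg) ?_
    (by simpa using hf.const_mul (K : ℝ))
  filter_upwards [Filter.mem_inf_of_right (Filter.mem_principal_self _)] with E hE
  rw [Finset.mul_sum]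
  exact Finset.sum_le_sum fun i hi => hg.dist_le_mul _ (hfs (hE.1 i hi).1) _ (hfs (hE.1 i hi).2)

theorem ContDiff.comp_absolutelyContinuousOnInterval {E F : Type*} [NormedAddCommGroup E]
    [NormedSpace ℝ E] [ProperSpace E] [NormedAddCommGroup F] [NormedSpace ℝ F]
    {g : E → F} (hg : ContDiff ℝ 1 g) {f : ℝ → E} {a b : ℝ}
    (hf : AbsolutelyContinuousOnInterval f a b) :
    AbsolutelyContinuousOnInterval (g ∘ f) a b := by
  obtain ⟨C, hC⟩ := hf.exists_bound
  obtain ⟨K, hK⟩ := hg.contDiffOn.exists_lipschitzOnWith one_ne_zero (convex_closedBall 0 C)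
    (isCompact_closedBall 0 C)
  exact hK.comp_absolutelyContinuousOnInterval hf fun x hx => mem_closedBall_zero_iff.2 (hC x hx)

theorem AbsolutelyContinuousOnInterval.sub_le_integral_of_ae_deriv_le {f g : ℝ → ℝ} {a b : ℝ}
    (hab : a ≤ b) (hf : AbsolutelyContinuousOnInterval f a b)
    (hg : IntervalIntegrable g volume a b) (hfg : ∀ᵐ x, x ∈ Icc a b → deriv f x ≤ g x) :
    f b - f a ≤ ∫ x in a..b, g x := by
  rw [← hf.integral_deriv_eq_sub]
  exact intervalIntegral.integral_mono_ae_restrict hab hf.intervalIntegrable_deriv hg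
    ((ae_restrict_iff' measurableSet_Icc).2 hfg)

theorem le_mul_exp_add_integral_exp_mul_of_le_add_integral_mul {u v' w : ℝ → ℝ} {a b c : ℝ}
    (hab : a ≤ b) (hu_nonneg : ∀ x ∈ Icc a b, 0 ≤ u x) (hu : IntervalIntegrable u volume a b)
    (hv' : IntervalIntegrable v' volume a b)
    (huw : IntervalIntegrable (fun x => u x * w x) volume a b)
    (hw : ∀ x ∈ Icc a b, w x ≤ c + (∫ s in a..x, v' s) + ∫ s in a..x, u s * w s) :
    w b ≤ c * exp (∫ s in a..b, u s) + ∫ s in a..b, exp (∫ r in s..b, u r) * v' s := by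
  set U := fun x => ∫ s in a..x, u s
  set G := fun x => c + (∫ s in a..x, v' s) + ∫ s in a..x, u s * w s with hG
  have ha : a ∈ uIcc a b := left_mem_uIcc
  have hUac := hu.absolutelyContinuousOnInterval_intervalIntegral ha
  have hGac : AbsolutelyContinuousOnInterval G a b :=
    ((LipschitzWith.const c).lipschitzOnWith.absolutelyContinuousOnInterval.fun_add
      (hv'.absolutelyContinuousOnInterval_intervalIntegral ha)).fun_add
      (huw.absolutelyContinuousOnInterval_intervalIntegral ha)
  have hEac : AbsolutelyContinuousOnInterval (fun x => exp (-U x)) a b :=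
    contDiff_exp.comp_absolutelyContinuousOnInterval hUac.neg
  have hderiv : ∀ᵐ x, x ∈ Icc a b → deriv (fun x => exp (-U x) * G x) x ≤ exp (-U x) * v' x := by
    filter_upwards [hu.ae_hasDerivAt_integral, hv'.ae_hasDerivAt_integral,
      huw.ae_hasDerivAt_integral] with x hUx hVx hRx hx
    have hx' : x ∈ uIcc a b := by rwa [uIcc_of_le hab]
    have hF : HasDerivAt (fun x => exp (-U x) * G x)
        (exp (-U x) * -u x * G x + exp (-U x) * (v' x + u x * w x)) x :=
      ((hUx hx' a ha).neg.exp).mul (((hVx hx' a ha).const_add c).add (hRx hx' a ha))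
    rw [hF.deriv]
    have : 0 ≤ exp (-U x) * (u x * (G x - w x)) :=
      mul_nonneg (exp_pos _).le (mul_nonneg (hu_nonneg x hx) (sub_nonneg.2 (hw x hx)))
    linarith
  have key := (hEac.fun_mul hGac).sub_le_integral_of_ae_deriv_le hab
    (hv'.continuousOn_mul hEac.continuousOn) hderiv
  have hUa : U a = 0 := intervalIntegral.integral_same
  have hGa : G a = c := by simp [hG]
  rw [hUa, hGa, neg_zero, exp_zero, one_mul] at key
  have hexp : ∫ s in a..b, exp (∫ r in s..b, u r) * v' s
      = exp (U b) * ∫ s in a..b, exp (-U s) * v' s := by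
    rw [← intervalIntegral.integral_const_mul]
    refine intervalIntegral.integral_congr fun s hs => ?_
    rw [← intervalIntegral.integral_interval_sub_left hu (hu.mono_set (uIcc_subset_uIcc ha hs)),
      sub_eq_add_neg, exp_add]
    ring
  rw [hexp]
  calc w b ≤ G b := hw b ⟨hab, le_rfl⟩
    _ = exp (U b) * (exp (-U b) * G b) := by
      rw [← mul_assoc, ← exp_add, add_neg_cancel, exp_zero, one_mul]
    _ ≤ exp (U b) * (c + ∫ s in a..b, exp (-U s) * v' s) := by gcongr; linarith
    _ = _ := by ring

theorem stmt_0_general (a b : ℝ) (u v v' w : ℝ → ℝ)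
    (hu_nonneg : ∀ t ∈ Icc a b, 0 ≤ u t)
    (hu_int : IntegrableOn u (Icc a b))
    (hv'_int : IntegrableOn v' (Icc a b))
    (hv_ftc : ∀ t ∈ Icc a b, v t = v a + ∫ s in a..t, v' s)
    (hw_cont : ContinuousOn w (Icc a b))
    (hineq : ∀ t ∈ Icc a b, w t ≤ v t + ∫ s in a..t, u s * w s) :
    ∀ t ∈ Icc a b,
      w t ≤ v a * Real.exp (∫ s in a..t, u s)
        + ∫ s in a..t, Real.exp (∫ r in s..t, u r) * v' s := by
  intro t ht
  have hsub : Icc a t ⊆ Icc a b := Icc_subset_Icc_right ht.2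
  have hint {f : ℝ → ℝ} (hf : IntegrableOn f (Icc a b)) : IntervalIntegrable f volume a t :=
    (intervalIntegrable_iff_integrableOn_Icc_of_le ht.1).2 (hf.mono_set hsub)
  refine le_mul_exp_add_integral_exp_mul_of_le_add_integral_mul ht.1
    (fun x hx => hu_nonneg x (hsub hx)) (hint hu_int) (hint hv'_int)
    (hint (hu_int.mul_continuousOn hw_cont isCompact_Icc)) fun x hx => ?_
  rw [← hv_ftc x (hsub hx)]
  exact hineq x (hsub hx)

/-- Gronwall-type lemma (Lemma 2.16). -/
theorem stmt_0 (a b : ℝ) (hab : a ≤ b) (u v v' w : ℝ → ℝ)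
    (hu_nonneg : ∀ t ∈ Icc a b, 0 ≤ u t)
    (hu_int : IntegrableOn u (Icc a b))
    (hv_deriv : ∀ t ∈ Icc a b, HasDerivWithinAt v (v' t) (Icc a b) t)
    (hv'_int : IntegrableOn v' (Icc a b))
    (hv_ftc : ∀ t ∈ Icc a b, v t = v a + ∫ s in a..t, v' s)
    (hw_cont : ContinuousOn w (Icc a b))
    (hineq : ∀ t ∈ Icc a b, w t ≤ v t + ∫ s in a..t, u s * w s) :
    ∀ t ∈ Icc a b,
      w t ≤ v a * Real.exp (∫ s in a..t, u s)
        + ∫ s in a..t, Real.exp (∫ r in s..t, u r) * v' s :=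
  stmt_0_general a b u v v' w hu_nonneg hu_int hv'_int hv_ftc hw_cont hineq
end

section
/- (Integral Gronwall inequality with inhomogeneous term.) Let τ ≤ T be real numbers, c ≥ 0 a constant, V ∈ ℝ, let w : ℝ → ℝ be continuous and nonnegative on [τ,T], and let h : ℝ → ℝ be nonnegative and integrable on [τ,T]. If w(t) ≤ V + c·∫_τ^t w(s) ds + ∫_τ^t h(s) ds for every t ∈ [τ,T], then for every t ∈ [τ,T], w(t) ≤ V·exp(c(t−τ)) + ∫_τ^t exp(c(t−s))·h(s) ds. -/
/-!
The right-hand side `R u = V + c ∫_τ^u w + ∫_τ^u h` of the hypothesis is absolutely continuous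
with `R' = c w + h ≤ c R + h` almost everywhere, since `w ≤ R` and `c ≥ 0`. Hence
`(e^{c(t-u)} R u)' ≤ e^{c(t-u)} h u` a.e., and the fundamental theorem of calculus for absolutely
continuous functions, integrated over `[τ, t]`, gives the bound on `R t ≥ w t`.
-/

open MeasureTheory Set

theorem AbsolutelyContinuousOnInterval.le_exp_mul_add_integral_of_deriv_le {R g : ℝ → ℝ}
    {a b c : ℝ} (hab : a ≤ b) (hR : AbsolutelyContinuousOnInterval R a b)
    (hg : IntervalIntegrable g volume a b)
    (hderiv : ∀ᵐ x, x ∈ Icc a b → deriv R x ≤ c * R x + g x) :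
    R b ≤ Real.exp (c * (b - a)) * R a + ∫ s in a..b, Real.exp (c * (b - s)) * g s := by
  set E : ℝ → ℝ := fun x ↦ Real.exp (c * (b - x))
  have hE (x : ℝ) : HasDerivAt E (-c * E x) x := by
    have := (((hasDerivAt_id x).const_sub b).const_mul c).exp
    simp only [id, mul_neg, mul_one] at this
    rwa [mul_comm, ← neg_mul] at this
  have hER : AbsolutelyContinuousOnInterval (fun x ↦ E x * R x) a b :=
    ((by fun_prop : ContDiff ℝ 1 E).contDiffOn.absolutelyContinuousOnInterval).fun_mul hR
  have hmono : ∫ x in a..b, deriv (fun x ↦ E x * R x) x ≤ ∫ x in a..b, E x * g x := by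
    refine intervalIntegral.integral_mono_ae_restrict hab hER.intervalIntegrable_deriv
      (hg.continuousOn_mul (by fun_prop)) ?_
    have hRdiff := hR.ae_differentiableAt
    rw [uIcc_of_le hab] at hRdiff
    filter_upwards [(ae_restrict_iff' measurableSet_Icc).mpr hRdiff,
      (ae_restrict_iff' measurableSet_Icc).mpr hderiv, ae_restrict_mem measurableSet_Icc]
      with x hdiff hle hx
    rw [((hE x).fun_mul hdiff.hasDerivAt).deriv]
    nlinarith [hle, Real.exp_pos (c * (b - x))]
  rw [hER.integral_deriv_eq_sub] at hmono
  simp only [E, sub_self, mul_zero, Real.exp_zero, one_mul] at hmono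
  linarith

theorem stmt_1_general (τ T : ℝ) (c : ℝ) (hc : 0 ≤ c) (V : ℝ)
    (w h : ℝ → ℝ)
    (hw_cont : ContinuousOn w (Icc τ T))
    (hh_int : IntegrableOn h (Icc τ T))
    (hineq : ∀ t ∈ Icc τ T,
      w t ≤ V + c * (∫ s in τ..t, w s) + ∫ s in τ..t, h s) :
    ∀ t ∈ Icc τ T,
      w t ≤ V * Real.exp (c * (t - τ)) + ∫ s in τ..t, Real.exp (c * (t - s)) * h s := by
  intro t ⟨hτt, htT⟩
  have hsub : Icc τ t ⊆ Icc τ T := Icc_subset_Icc_right htT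
  have hw : IntervalIntegrable w volume τ t :=
    (intervalIntegrable_iff_integrableOn_Icc_of_le hτt).mpr (hw_cont.mono hsub).integrableOn_Icc
  have hh : IntervalIntegrable h volume τ t :=
    (intervalIntegrable_iff_integrableOn_Icc_of_le hτt).mpr (hh_int.mono_set hsub)
  set R : ℝ → ℝ := fun u ↦ V + c * (∫ s in τ..u, w s) + ∫ s in τ..u, h s
  have hR : AbsolutelyContinuousOnInterval R τ t :=
    ((contDiffOn_const.absolutelyContinuousOnInterval).add
      ((hw.absolutelyContinuousOnInterval_intervalIntegral left_mem_uIcc).const_mul c)).add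
      (hh.absolutelyContinuousOnInterval_intervalIntegral left_mem_uIcc)
  have hderiv : ∀ᵐ x, x ∈ Icc τ t → deriv R x ≤ c * R x + h x := by
    filter_upwards [hw.ae_hasDerivAt_integral, hh.ae_hasDerivAt_integral] with x hwx hhx hx
    have hx' : x ∈ uIcc τ t := (uIcc_of_le hτt).symm ▸ hx
    have hRx : HasDerivAt R (c * w x + h x) x :=
      (((hwx hx' τ left_mem_uIcc).const_mul c).const_add V).add (hhx hx' τ left_mem_uIcc)
    rw [hRx.deriv]
    gcongr
    exact hineq x (hsub hx)
  calc w t ≤ R t := hineq t ⟨hτt, htT⟩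
    _ ≤ Real.exp (c * (t - τ)) * R τ + ∫ s in τ..t, Real.exp (c * (t - s)) * h s :=
      hR.le_exp_mul_add_integral_of_deriv_le hτt hh hderiv
    _ = V * Real.exp (c * (t - τ)) + ∫ s in τ..t, Real.exp (c * (t - s)) * h s := by
      simp [R, mul_comm]

/-- Integral Gronwall inequality with inhomogeneous term. -/
theorem stmt_1 (τ T : ℝ) (hτT : τ ≤ T) (c : ℝ) (hc : 0 ≤ c) (V : ℝ)
    (w h : ℝ → ℝ)
    (hw_cont : ContinuousOn w (Icc τ T))
    (hw_nonneg : ∀ t ∈ Icc τ T, 0 ≤ w t)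
    (hh_nonneg : ∀ t ∈ Icc τ T, 0 ≤ h t)
    (hh_int : IntegrableOn h (Icc τ T))
    (hineq : ∀ t ∈ Icc τ T,
      w t ≤ V + c * (∫ s in τ..t, w s) + ∫ s in τ..t, h s) :
    ∀ t ∈ Icc τ T,
      w t ≤ V * Real.exp (c * (t - τ)) + ∫ s in τ..t, Real.exp (c * (t - s)) * h s :=
  stmt_1_general τ T c hc V w h hw_cont hh_int hineq
end

section
/- (Integral estimate (4.30).) Let β and β₁ be real numbers with 0 < β₁ < β, let τ ≤ t be real numbers, and let g : ℝ → ℝ be nonnegative and integrable on [τ,t]. Then exp(−βt) · ∫_τ^t exp((β−β₁)s) · (∫_τ^s exp(β₁ r)·g(r) dr) ds ≤ (1/(β−β₁)) · ∫_τ^t exp(−β₁(t−s))·g(s) ds. -/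
open MeasureTheory Set

/-- Integral estimate (4.30). -/
theorem stmt_11 (β β₁ τ t : ℝ) (h0 : 0 < β₁) (h1 : β₁ < β) (hτt : τ ≤ t)
    (g : ℝ → ℝ) (hg_nonneg : ∀ s, 0 ≤ g s) (hg_int : IntegrableOn g (Icc τ t)) :
    Real.exp (-β*t) *
        ∫ s in τ..t, Real.exp ((β-β₁)*s) * ∫ r in τ..s, Real.exp (β₁*r) * g r ≤
      (1/(β-β₁)) * ∫ s in τ..t, Real.exp (-β₁*(t-s)) * g s := by
  have hc : 0 < β - β₁ := sub_pos.mpr h1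
  set h : ℝ → ℝ := fun r => Real.exp (β₁*r) * g r with hh_def
  have hcont : Continuous fun r : ℝ => Real.exp (β₁*r) :=
    Real.continuous_exp.comp (continuous_const.mul continuous_id)
  have hh_int : IntegrableOn h (Icc τ t) :=
    IntegrableOn.continuousOn_mul hcont.continuousOn hg_int isCompact_Icc
  have hh_nonneg : ∀ r, 0 ≤ h r := fun r =>
    mul_nonneg (Real.exp_nonneg _) (hg_nonneg r)
  set F : ℝ → ℝ := fun s => ∫ r in τ..s, h r with hF_def
  have hh_ii : ∀ a b, a ∈ Icc τ t → b ∈ Icc τ t → IntervalIntegrable h volume a b := by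
    intro a b ha hb
    exact (hh_int.mono_set (uIcc_subset_Icc ha hb)).intervalIntegrable
  have hτ_mem : τ ∈ Icc τ t := ⟨le_refl _, hτt⟩
  have ht_mem : t ∈ Icc τ t := ⟨hτt, le_refl _⟩
  have hF_nonneg : 0 ≤ F t :=
    intervalIntegral.integral_nonneg hτt (fun r _ => hh_nonneg r)
  have hF_mono : ∀ s ∈ Icc τ t, F s ≤ F t := by
    intro s hs
    have h1' := hh_ii τ s hτ_mem hs
    have h2' := hh_ii s t hs ht_mem
    have hadd := intervalIntegral.integral_add_adjacent_intervals h1' h2'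
    have hnn : 0 ≤ ∫ r in s..t, h r :=
      intervalIntegral.integral_nonneg hs.2 (fun r _ => hh_nonneg r)
    simp only [hF_def]
    linarith [hadd]
  have hF_cont : ContinuousOn F (Icc τ t) := by
    have := intervalIntegral.continuousOn_primitive_interval
      (f := h) (μ := volume) (a := τ) (b := t) (by rwa [uIcc_of_le hτt])
    rwa [uIcc_of_le hτt] at this
  have hcont2 : Continuous fun s : ℝ => Real.exp ((β-β₁)*s) :=
    Real.continuous_exp.comp (continuous_const.mul continuous_id)
  have int1 : IntervalIntegrable (fun s => Real.exp ((β-β₁)*s) * F s) volume τ t := by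
    rw [intervalIntegrable_iff_integrableOn_Icc_of_le hτt]
    exact (hcont2.continuousOn.mul hF_cont).integrableOn_compact isCompact_Icc
  have int2 : IntervalIntegrable (fun s => Real.exp ((β-β₁)*s) * F t) volume τ t :=
    ((hcont2.mul continuous_const).intervalIntegrable τ t)
  -- Step A : monotone comparison
  have stepA : (∫ s in τ..t, Real.exp ((β-β₁)*s) * F s) ≤
      ∫ s in τ..t, Real.exp ((β-β₁)*s) * F t :=
    intervalIntegral.integral_mono_on hτt int1 int2
      (fun x hx => mul_le_mul_of_nonneg_left (hF_mono x hx) (Real.exp_nonneg _))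
  -- Step B : compute the right integral
  have hexp_int : (∫ s in τ..t, Real.exp ((β-β₁)*s)) =
      (Real.exp ((β-β₁)*t) - Real.exp ((β-β₁)*τ)) / (β-β₁) := by
    have : ∀ s : ℝ, HasDerivAt (fun x => Real.exp ((β-β₁)*x) / (β-β₁))
        (Real.exp ((β-β₁)*s)) s := by
      intro s
      have := ((hasDerivAt_id s).const_mul (β-β₁)).exp
      simpa [mul_comm, mul_div_assoc, mul_div_cancel_left₀ _ (ne_of_gt hc)] using
        this.div_const (β-β₁)
    rw [intervalIntegral.integral_eq_sub_of_hasDerivAt (fun x _ => this x)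
      (hcont2.intervalIntegrable τ t)]
    ring
  have stepB : (∫ s in τ..t, Real.exp ((β-β₁)*s) * F t) ≤
      Real.exp ((β-β₁)*t) / (β-β₁) * F t := by
    rw [intervalIntegral.integral_mul_const, hexp_int]
    have : (Real.exp ((β-β₁)*t) - Real.exp ((β-β₁)*τ)) / (β-β₁) ≤
        Real.exp ((β-β₁)*t) / (β-β₁) := by
      gcongr
      linarith [Real.exp_pos ((β-β₁)*τ)]
    exact mul_le_mul_of_nonneg_right this hF_nonneg
  -- RHS equals exp(-β₁ t) * F t / (β-β₁)
  have hRHS : (∫ s in τ..t, Real.exp (-β₁*(t-s)) * g s) = Real.exp (-β₁*t) * F t := by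
    rw [hF_def, ← intervalIntegral.integral_const_mul]
    apply intervalIntegral.integral_congr
    intro x _
    simp only [hh_def]
    rw [← mul_assoc, ← Real.exp_add]
    ring_nf
  -- put everything together
  have hLHS_le : Real.exp (-β*t) *
      (∫ s in τ..t, Real.exp ((β-β₁)*s) * F s) ≤
      Real.exp (-β*t) * (Real.exp ((β-β₁)*t) / (β-β₁) * F t) :=
    mul_le_mul_of_nonneg_left (stepA.trans stepB) (Real.exp_nonneg _)
  have hfinal : Real.exp (-β*t) * (Real.exp ((β-β₁)*t) / (β-β₁) * F t) =
      (1/(β-β₁)) * (Real.exp (-β₁*t) * F t) := by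
    rw [show Real.exp (-β*t) * (Real.exp ((β-β₁)*t) / (β-β₁) * F t)
        = (Real.exp (-β*t) * Real.exp ((β-β₁)*t)) * F t / (β-β₁) by ring,
      ← Real.exp_add]
    ring_nf
  rw [hRHS]
  calc Real.exp (-β*t) * ∫ s in τ..t, Real.exp ((β-β₁)*s) * F s
      ≤ Real.exp (-β*t) * (Real.exp ((β-β₁)*t) / (β-β₁) * F t) := hLHS_le
    _ = (1/(β-β₁)) * (Real.exp (-β₁*t) * F t) := hfinal
end
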